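/- arXiv:2107.08210 — 5 statements merged into one kernel-verified Lean document; each statement's English description precedes it below -/
import Mathlib

section
/- For a Leibniz algebra g, if d, d' are in the quasi-Lie-centroid QΓ^Lie(g), then the commutator [d,d'] = d∘d' - d'∘d is a quasi-Lie-derivation; indeed [[d,d'](x), y]_Lie + [x, [d,d'](y)]_Lie = 0 for all x,y. -/
structure LeibnizAlgebra (K g : Type*) [CommRing K] [AddCommGroup g] [Module K g] where
  br : g →ₗ[K] g →ₗ[K] g
  leibniz : ∀ x y z : g, br x (br y z) = br (br x y) z - br (br x z) y

namespace LeibnizAlgebra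

variable {K g : Type*} [Field K] [AddCommGroup g] [Module K g]

/-- The symmetrised (Lie) bracket `[x,y]_Lie = [x,y] + [y,x]`. -/
def lie (L : LeibnizAlgebra K g) (x y : g) : g := L.br x y + L.br y x

/-- A Lie-derivation of a Leibniz algebra. -/
def IsLieDer (L : LeibnizAlgebra K g) (d : g →ₗ[K] g) : Prop :=
  ∀ x y : g, d (L.lie x y) = L.lie (d x) y + L.lie x (d y)

/-- Membership in the Lie-centroid. -/
def IsLieCentroid (L : LeibnizAlgebra K g) (d : g →ₗ[K] g) : Prop :=
  ∀ x y : g, d (L.lie x y) = L.lie (d x) y ∧ d (L.lie x y) = L.lie x (d y)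

/-- Membership in the quasi-Lie-centroid. -/
def IsQLieCentroid (L : LeibnizAlgebra K g) (d : g →ₗ[K] g) : Prop :=
  ∀ x y : g, L.lie (d x) y = L.lie x (d y)

/-- A two-sided ideal of a Leibniz algebra. -/
def IsTwoSidedIdeal (L : LeibnizAlgebra K g) (h : Submodule K g) : Prop :=
  ∀ x ∈ h, ∀ y : g, L.br x y ∈ h ∧ L.br y x ∈ h

/-- `γ₂^Lie(g)`: the span of all symmetrised brackets. -/
def gamma2 (L : LeibnizAlgebra K g) : Submodule K g :=
  Submodule.span K {z | ∃ x y : g, z = L.lie x y}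

/-- The Lie-centre as a set. -/
def lieCentreSet (L : LeibnizAlgebra K g) : Set g := {z | ∀ x : g, L.lie x z = 0}

end LeibnizAlgebra

open LeibnizAlgebra

/-- The commutator of two quasi-Lie-centroid elements is a quasi-Lie-derivation. -/
theorem stmt9 {K g : Type*} [Field K] [AddCommGroup g] [Module K g]
    (L : LeibnizAlgebra K g) (d d' : g →ₗ[K] g)
    (hd : L.IsQLieCentroid d) (hd' : L.IsQLieCentroid d') :
    (∀ x y : g, L.lie ((d ∘ₗ d' - d' ∘ₗ d) x) y + L.lie x ((d ∘ₗ d' - d' ∘ₗ d) y) = 0) ∧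
    (∃ f' : g →ₗ[K] g, ∀ x y : g,
      L.lie ((d ∘ₗ d' - d' ∘ₗ d) x) y + L.lie x ((d ∘ₗ d' - d' ∘ₗ d) y) = f' (L.lie x y)) := by
  have key : ∀ x y : g, L.lie ((d ∘ₗ d' - d' ∘ₗ d) x) y + L.lie x ((d ∘ₗ d' - d' ∘ₗ d) y) = 0 := by
    intro x y
    simp only [LinearMap.sub_apply, LinearMap.comp_apply, LeibnizAlgebra.lie, map_sub]
    have h1 := hd (d' x) y
    have h2 := hd' x (d y)
    have h3 := hd x (d' y)
    have h4 := hd' (d x) y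
    simp only [LeibnizAlgebra.lie] at h1 h2 h3 h4
    linear_combination (norm := abel) h1 + h2 - h3 - h4
  exact ⟨key, 0, fun x y => by rw [key]; simp⟩
end

section
/- For a Leibniz algebra g, if d ∈ Γ^Lie(g) and d' ∈ QΓ^Lie(g), then for all x, the element [d,d'](x) = (d∘d' - d'∘d)(x) lies in the Lie-centre Z_Lie(g). In particular, if Z_Lie(g) = 0 then d and d' commute. -/
open LeibnizAlgebra

/-- `[Γ^Lie(g), QΓ^Lie(g)]` lands in the Lie-centre; if the Lie-centre is zero
the two elements commute. -/
theorem stmt11 {K g : Type*} [Field K] [AddCommGroup g] [Module K g]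
    (L : LeibnizAlgebra K g) (d d' : g →ₗ[K] g)
    (hd : L.IsLieCentroid d) (hd' : L.IsQLieCentroid d') :
    (∀ x w : g, L.lie w ((d ∘ₗ d' - d' ∘ₗ d) x) = 0) ∧
    ((∀ z : g, (∀ w : g, L.lie w z = 0) → z = 0) → d ∘ₗ d' = d' ∘ₗ d) := by

  have sym : ∀ a b : g, L.lie a b = L.lie b a := by
    intro a b; simp [LeibnizAlgebra.lie, add_comm]
  have key : ∀ x w : g, L.lie w ((d ∘ₗ d' - d' ∘ₗ d) x) = 0 := by
    intro x w
    have h1 : L.lie w (d (d' x)) = L.lie (d' w) (d x) := by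
      have e1 : d (L.lie w (d' x)) = L.lie w (d (d' x)) := (hd w (d' x)).2
      have e2 : L.lie w (d' x) = L.lie (d' w) x := by
        rw [sym w (d' x), hd' x w, sym x (d' w)]
      have e3 : d (L.lie (d' w) x) = L.lie (d' w) (d x) := (hd (d' w) x).2
      rw [← e1, e2, e3]
    have h2 : L.lie w (d' (d x)) = L.lie (d' w) (d x) := by
      rw [sym w (d' (d x)), hd' (d x) w, sym (d x) (d' w)]
    simp only [LinearMap.sub_apply, LinearMap.comp_apply]
    have hz : ∀ a b c : g, L.lie a (b - c) = L.lie a b - L.lie a c := by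
      intro a b c; simp [LeibnizAlgebra.lie, map_sub]; abel
    rw [hz, h1, h2, sub_self]
  refine ⟨key, fun hz => ?_⟩
  ext x
  have := hz ((d ∘ₗ d' - d' ∘ₗ d) x) (fun w => key x w)
  simpa [sub_eq_zero] using this
end

section
/- Let g = m ⊕ n be a direct sum of two-sided ideals of a Leibniz algebra g with Z_Lie(g) = 0. Then every Lie-derivation d of g satisfies d(m) ⊆ m and d(n) ⊆ n, and Der^Lie(g) ≅ Der^Lie(m) ⊕ Der^Lie(n). -/
open LeibnizAlgebra

section Aux

variable {K g : Type*} [Field K] [AddCommGroup g] [Module K g] (L : LeibnizAlgebra K g)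

lemma lie_addl (x y z : g) : L.lie (x + y) z = L.lie x z + L.lie y z := by
  simp only [LeibnizAlgebra.lie, map_add, LinearMap.add_apply]; abel

lemma lie_addr (x y z : g) : L.lie x (y + z) = L.lie x y + L.lie x z := by
  simp only [LeibnizAlgebra.lie, map_add, LinearMap.add_apply]; abel

lemma lie_comm (x y : g) : L.lie x y = L.lie y x := add_comm _ _

lemma cross_zero {m n : Submodule K g}
    (hm : L.IsTwoSidedIdeal m) (hn : L.IsTwoSidedIdeal n) (hmn : m ⊓ n = ⊥)
    {x y : g} (hx : x ∈ m) (hy : y ∈ n) : L.lie x y = 0 := by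
  have h1 : L.br x y ∈ m ⊓ n := ⟨(hm x hx y).1, (hn y hy x).2⟩
  have h2 : L.br y x ∈ m ⊓ n := ⟨(hm x hx y).2, (hn y hy x).1⟩
  rw [hmn, Submodule.mem_bot] at h1 h2
  simp [LeibnizAlgebra.lie, h1, h2]

lemma lie_mem {m : Submodule K g} (hm : L.IsTwoSidedIdeal m)
    {x : g} (hx : x ∈ m) (y : g) : L.lie x y ∈ m :=
  m.add_mem (hm x hx y).1 (hm x hx y).2

lemma aux_pres {m n : Submodule K g}
    (hm : L.IsTwoSidedIdeal m) (hn : L.IsTwoSidedIdeal n)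
    (hmn : m ⊓ n = ⊥) (hsum : m ⊔ n = ⊤)
    (hz : ∀ z : g, (∀ x : g, L.lie x z = 0) → z = 0)
    (d : g →ₗ[K] g) (hd : L.IsLieDer d) : ∀ x ∈ m, d x ∈ m := by
  have decomp : ∀ z : g, ∃ a ∈ m, ∃ b ∈ n, z = a + b := by
    intro z
    have hz' : z ∈ m ⊔ n := hsum ▸ Submodule.mem_top
    rcases Submodule.mem_sup.mp hz' with ⟨a, ha, b, hb, h⟩
    exact ⟨a, ha, b, hb, h.symm⟩
  intro x hx
  obtain ⟨a, ha, b, hb, hab⟩ := decomp (d x)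
  -- show b is in the Lie centre, hence 0
  have key : ∀ y ∈ n, L.lie b y = 0 := by
    intro y hy
    have h0 := hd x y
    rw [cross_zero L hm hn hmn hx hy, map_zero] at h0
    obtain ⟨p, hp, q, hq, hpq⟩ := decomp (d y)
    have e1 : L.lie x (d y) = L.lie x p := by
      rw [hpq, lie_addr, cross_zero L hm hn hmn hx hq, add_zero]
    have e2 : L.lie (d x) y = L.lie b y := by
      rw [hab, lie_addl, cross_zero L hm hn hmn ha hy, zero_add]
    rw [e1, e2] at h0
    have hby_n : L.lie b y ∈ n := lie_mem L hn hb y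
    have hby_m : L.lie b y ∈ m := by
      have : L.lie b y = -(L.lie x p) := by
        rw [eq_comm, neg_eq_iff_add_eq_zero, add_comm]; exact h0.symm
      rw [this]
      exact m.neg_mem (lie_mem L hm hx p)
    have : L.lie b y ∈ m ⊓ n := ⟨hby_m, hby_n⟩
    rwa [hmn, Submodule.mem_bot] at this
  have hb0 : b = 0 := by
    apply hz
    intro z
    obtain ⟨zm, hzm, zn, hzn, hzeq⟩ := decomp z
    rw [hzeq, lie_addl, cross_zero L hm hn hmn hzm hb, lie_comm, key zn hzn, add_zero]
  rw [hab, hb0, add_zero]; exact ha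

end Aux

/-- If `g = m ⊕ n` as two-sided ideals and `Z_Lie(g) = 0`, every Lie-derivation
preserves `m` and `n`, and `Der^Lie(g) ≅ Der^Lie(m) ⊕ Der^Lie(n)`. -/
theorem stmt14 {K g : Type*} [Field K] [AddCommGroup g] [Module K g]
    (L : LeibnizAlgebra K g) (m n : Submodule K g)
    (hm : L.IsTwoSidedIdeal m) (hn : L.IsTwoSidedIdeal n)
    (hmn : m ⊓ n = ⊥) (hsum : m ⊔ n = ⊤)
    (hz : ∀ z : g, (∀ x : g, L.lie x z = 0) → z = 0) :
    (∀ d : g →ₗ[K] g, L.IsLieDer d → (∀ x ∈ m, d x ∈ m) ∧ (∀ x ∈ n, d x ∈ n)) ∧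
    (∀ d : g →ₗ[K] g, (∀ x ∈ m, d x ∈ m) → (∀ x ∈ n, d x ∈ n) →
      (L.IsLieDer d ↔
        ((∀ x ∈ m, ∀ y ∈ m, d (L.lie x y) = L.lie (d x) y + L.lie x (d y)) ∧
         (∀ x ∈ n, ∀ y ∈ n, d (L.lie x y) = L.lie (d x) y + L.lie x (d y))))) := by
  have hnm : n ⊓ m = ⊥ := by rw [inf_comm]; exact hmn
  have hns : n ⊔ m = ⊤ := by rw [sup_comm]; exact hsum
  have decomp : ∀ z : g, ∃ a ∈ m, ∃ b ∈ n, z = a + b := by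
    intro z
    have hz' : z ∈ m ⊔ n := hsum ▸ Submodule.mem_top
    rcases Submodule.mem_sup.mp hz' with ⟨a, ha, b, hb, h⟩
    exact ⟨a, ha, b, hb, h.symm⟩
  constructor
  · intro d hd
    exact ⟨aux_pres L hm hn hmn hsum hz d hd,
           aux_pres L hn hm hnm hns hz d hd⟩
  · intro d hdm hdn
    constructor
    · intro hd
      exact ⟨fun x _ y _ => hd x y, fun x _ y _ => hd x y⟩
    · rintro ⟨h1, h2⟩ x y
      obtain ⟨xm, hxm, xn, hxn, hx⟩ := decomp x
      obtain ⟨ym, hym, yn, hyn, hy⟩ := decomp y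
      subst hx hy
      have c1 : L.lie xm yn = 0 := cross_zero L hm hn hmn hxm hyn
      have c2 : L.lie xn ym = 0 := by rw [lie_comm]; exact cross_zero L hm hn hmn hym hxn
      have c3 : L.lie (d xm) yn = 0 := cross_zero L hm hn hmn (hdm xm hxm) hyn
      have c4 : L.lie (d xn) ym = 0 := by
        rw [lie_comm]; exact cross_zero L hm hn hmn hym (hdn xn hxn)
      have c5 : L.lie xm (d yn) = 0 := cross_zero L hm hn hmn hxm (hdn yn hyn)
      have c6 : L.lie xn (d ym) = 0 := by
        rw [lie_comm]; exact cross_zero L hm hn hmn (hdm ym hym) hxn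
      simp only [map_add, lie_addl, lie_addr, c1, c2, c3, c4, c5, c6, add_zero, zero_add]
      rw [h1 xm hxm ym hym, h2 xn hxn yn hyn]
      abel
end

section
/- In a free Leibniz algebra (or equivalently, as a consequence of the Leibniz identity in all Leibniz algebras), for every x the map d_x = [x,-]_Lie is a Lie-derivation if and only if 2[[x,y],z] + 2[[y,x],z] = 0 for all y,z; hence over a field of characteristic ≠ 2, left Lie-adjoint maps d_x are Lie-derivations for all x if and only if [[x,y]_Lie, z] = 0 for all x,y,z, i.e. γ_2^Lie(g) ⊆ Z(g). -/
namespace LeibnizAlgebra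

variable {K g : Type*} [Field K] [AddCommGroup g] [Module K g]

lemma br_lie' (L : LeibnizAlgebra K g) (x y z : g) : L.br x (L.lie y z) = 0 := by
  simp only [lie, map_add, L.leibniz]
  abel

lemma lie_comm' (L : LeibnizAlgebra K g) (x y : g) : L.lie x y = L.lie y x :=
  add_comm _ _

lemma lieDer_iff' (L : LeibnizAlgebra K g) (x : g) :
    L.IsLieDer (L.br x + L.br.flip x) ↔
    ∀ y z : g, L.br (L.lie y z) x = L.br (L.lie x y) z + L.br (L.lie x z) y := by
  unfold IsLieDer
  apply forall_congr'; intro y; apply forall_congr'; intro z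
  have e1 : (L.br x + L.br.flip x) (L.lie y z) = L.br (L.lie y z) x := by
    simp [LinearMap.add_apply, LinearMap.flip_apply, L.br_lie']
  have e2 : L.lie ((L.br x + L.br.flip x) y) z = L.br (L.lie x y) z := by
    show L.br (L.br x y + L.br y x) z + L.br z (L.br x y + L.br y x) = _
    rw [show L.br x y + L.br y x = L.lie x y from rfl, L.br_lie', add_zero]
  have e3 : L.lie y ((L.br x + L.br.flip x) z) = L.br (L.lie x z) y := by
    show L.br y (L.br x z + L.br z x) + L.br (L.br x z + L.br z x) y = _
    rw [show L.br x z + L.br z x = L.lie x z from rfl, L.br_lie', zero_add]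
  rw [e1, e2, e3]

lemma central_iff' (h2 : (2 : K) ≠ 0) (L : LeibnizAlgebra K g) :
    (∀ x : g, L.IsLieDer (L.br x + L.br.flip x)) ↔
    (∀ x y z : g, L.br (L.lie x y) z = 0) := by
  constructor
  · intro H x y z
    have Ex := (L.lieDer_iff' x).mp (H x) y z
    have Ey := (L.lieDer_iff' y).mp (H y) x z
    rw [L.lie_comm' y x] at Ey
    rw [Ey] at Ex
    have h' : (2 : K) • L.br (L.lie x y) z = 0 := by
      have h0 : L.br (L.lie y z) x + (2 : K) • L.br (L.lie x y) z
          = L.br (L.lie y z) x + 0 := by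
        rw [two_smul, add_zero,
          show L.br (L.lie y z) x + (L.br (L.lie x y) z + L.br (L.lie x y) z)
            = L.br (L.lie x y) z + (L.br (L.lie x y) z + L.br (L.lie y z) x) from by abel,
          ← Ex]
      exact add_left_cancel h0
    exact (smul_eq_zero.mp h').resolve_left h2
  · intro H x
    rw [L.lieDer_iff' x]
    intro y z
    rw [H, H, H, add_zero]

end LeibnizAlgebra

open LeibnizAlgebra

/-- The maps `d_x = [x,-]_Lie` are all Lie-derivations iff
`2[[x,y],z] + 2[[y,x],z] = 0` for all `x, y, z`; over a field of
characteristic ≠ 2 this happens iff `[[x,y]_Lie, z] = 0` for all `x, y, z`,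
i.e. `γ₂^Lie(g) ⊆ Z(g)`. -/
theorem stmt17 {K g : Type*} [Field K] [AddCommGroup g] [Module K g]
    (h2 : (2 : K) ≠ 0) (L : LeibnizAlgebra K g) :
    ((∀ x : g, L.IsLieDer (L.br x + L.br.flip x)) ↔
      (∀ x y z : g, (2 : K) • L.br (L.br x y) z + (2 : K) • L.br (L.br y x) z = 0)) ∧
    ((∀ x : g, L.IsLieDer (L.br x + L.br.flip x)) ↔
      (∀ x y z : g, L.br (L.lie x y) z = 0)) ∧
    ((∀ x y z : g, L.br (L.lie x y) z = 0) ↔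
      (∀ w ∈ L.gamma2, ∀ x : g, L.br w x = 0 ∧ L.br x w = 0)) := by
  have key := central_iff' h2 L
  have expand : ∀ x y z : g,
      (2 : K) • L.br (L.br x y) z + (2 : K) • L.br (L.br y x) z
        = (2 : K) • L.br (L.lie x y) z := by
    intro x y z
    simp [lie, map_add, LinearMap.add_apply, smul_add]
  refine ⟨?_, key, ?_⟩
  · rw [key]
    constructor
    · intro H x y z
      rw [expand, H, smul_zero]
    · intro H x y z
      have := H x y z
      rw [expand] at this
      exact (smul_eq_zero.mp this).resolve_left h2
  · constructor
    · intro H w hw x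
      refine Submodule.span_induction (p := fun w _ => L.br w x = 0 ∧ L.br x w = 0)
        ?_ ?_ ?_ ?_ hw
      · rintro w ⟨a, b, rfl⟩
        exact ⟨H a b x, L.br_lie' x a b⟩
      · simp
      · rintro a b _ _ ⟨ha1, ha2⟩ ⟨hb1, hb2⟩
        constructor <;> simp [map_add, LinearMap.add_apply, ha1, ha2, hb1, hb2]
      · rintro c a _ ⟨ha1, ha2⟩
        constructor <;> simp [map_smul, LinearMap.smul_apply, ha1, ha2]
    · intro H x y z
      exact (H (L.lie x y) (Submodule.subset_span ⟨x, y, rfl⟩) z).1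
end

section
/- Let A be a commutative associative K-algebra and g a Leibniz algebra over K. Then A ⊗ g with bracket [a1 ⊗ g1, a2 ⊗ g2] = (a1 a2) ⊗ [g1,g2] is a Leibniz algebra, and for f in the centroid Γ(A) and φ in the Lie-centroid Γ^Lie(g), the map f ⊗ φ (i.e. a ⊗ x ↦ f(a) ⊗ φ(x)) belongs to Γ^Lie(A ⊗ g). -/
open LeibnizAlgebra

open TensorProduct in
/-- The tensor product `A ⊗ g` of a commutative associative algebra and a
Leibniz algebra is a Leibniz algebra, and `Γ(A) ⊗ Γ^Lie(g) ⊆ Γ^Lie(A ⊗ g)`. -/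
theorem stmt18 {K A g : Type*} [Field K] [AddCommGroup g] [Module K g]
    [NonUnitalCommRing A] [Module K A] [SMulCommClass K A A] [IsScalarTower K A A]
    (L : LeibnizAlgebra K g)
    (B : A ⊗[K] g →ₗ[K] A ⊗[K] g →ₗ[K] A ⊗[K] g)
    (hB : ∀ (a₁ a₂ : A) (x₁ x₂ : g),
      B (a₁ ⊗ₜ[K] x₁) (a₂ ⊗ₜ[K] x₂) = (a₁ * a₂) ⊗ₜ[K] L.br x₁ x₂) :
    (∀ u v w : A ⊗[K] g, B u (B v w) = B (B u v) w - B (B u w) v) ∧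
    (∀ f : A →ₗ[K] A, (∀ a b : A, f (a * b) = f a * b ∧ f (a * b) = a * f b) →
      ∀ φ : g →ₗ[K] g, L.IsLieCentroid φ →
        ∀ u v : A ⊗[K] g,
          TensorProduct.map f φ (B u v + B v u) =
            B (TensorProduct.map f φ u) v + B v (TensorProduct.map f φ u) ∧
          TensorProduct.map f φ (B u v + B v u) =
            B u (TensorProduct.map f φ v) + B (TensorProduct.map f φ v) u) := by

  constructor
  · intro u v w
    induction u using TensorProduct.induction_on with
    | zero => simp
    | add u₁ u₂ h1 h2 => simp [map_add, h1, h2]; abel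
    | tmul a x =>
      induction v using TensorProduct.induction_on with
      | zero => simp
      | add v₁ v₂ h1 h2 => simp [map_add, h1, h2]; abel
      | tmul b y =>
        induction w using TensorProduct.induction_on with
        | zero => simp
        | add w₁ w₂ h1 h2 => simp [map_add, h1, h2]; abel
        | tmul c z =>
          simp only [hB, L.leibniz, TensorProduct.tmul_sub]
          rw [mul_assoc a b c, mul_assoc a c b, mul_comm c b]
  · intro f hf φ hφ u v
    have hφ' : ∀ x y : g, φ (L.br x y + L.br y x) = L.br (φ x) y + L.br y (φ x) ∧
        φ (L.br x y + L.br y x) = L.br x (φ y) + L.br (φ y) x := by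
      intro x y
      have := hφ x y
      simpa [LeibnizAlgebra.lie] using this
    induction u using TensorProduct.induction_on with
    | zero => simp
    | add u₁ u₂ h1 h2 =>
      obtain ⟨h1a, h1b⟩ := h1; obtain ⟨h2a, h2b⟩ := h2
      constructor <;> simp only [map_add, LinearMap.add_apply] at * <;>
        [linear_combination (norm := abel) h1a + h2a; linear_combination (norm := abel) h1b + h2b]
    | tmul a x =>
      induction v using TensorProduct.induction_on with
      | zero => simp
      | add v₁ v₂ h1 h2 =>
        obtain ⟨h1a, h1b⟩ := h1; obtain ⟨h2a, h2b⟩ := h2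
        constructor <;> simp only [map_add, LinearMap.add_apply] at * <;>
          [linear_combination (norm := abel) h1a + h2a; linear_combination (norm := abel) h1b + h2b]
      | tmul b y =>
        have key : B (a ⊗ₜ[K] x) (b ⊗ₜ[K] y) + B (b ⊗ₜ[K] y) (a ⊗ₜ[K] x) =
            (a * b) ⊗ₜ[K] (L.br x y + L.br y x) := by
          rw [hB, hB, mul_comm b a, TensorProduct.tmul_add]
        constructor
        · rw [key, TensorProduct.map_tmul, (hf a b).1, (hφ' x y).1, TensorProduct.map_tmul,
            hB, hB, mul_comm b (f a), TensorProduct.tmul_add]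
        · rw [key, TensorProduct.map_tmul, (hf a b).2, (hφ' x y).2, TensorProduct.map_tmul,
            hB, hB, mul_comm (f b) a, TensorProduct.tmul_add]
end
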